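/- arXiv:2003.12468 — 6 statements merged into one kernel-verified Lean document; each statement's English description precedes it below -/
import Mathlib

section
/- For any positive integers a and b with a > b, there exists an (a, b)-reshaping sequence of length k < log_{3/2}(a) + 2, i.e., a reshaping sequence (η_0, ..., η_k) with η_0 = a, η_k = b, and k < log_{3/2}(a) + 2. -/
/-- A reshaping sequence: positive integers with `η (i-1) > η i ≥ ⌊2·η (i-1)/3⌋`. -/
def IsReshapingSeq (k : ℕ) (η : ℕ → ℕ) : Prop :=
  (∀ i ≤ k, 0 < η i) ∧ ∀ i, 1 ≤ i → i ≤ k → η i < η (i - 1) ∧ 2 * η (i - 1) / 3 ≤ η i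

theorem stmt_2 (a b : ℕ) (ha : 0 < b) (hab : b < a) :
    ∃ (k : ℕ) (η : ℕ → ℕ), IsReshapingSeq k η ∧ η 0 = a ∧ η k = b ∧
      (k : ℝ) < Real.logb (3 / 2) (a : ℝ) + 2 := by
  set g : ℕ → ℕ := fun i => Nat.rec a (fun _ prev => max b (2 * prev / 3)) i with hg
  have hg0 : g 0 = a := rfl
  have hgs : ∀ i, g (i + 1) = max b (2 * g i / 3) := fun i => rfl
  have hgeb : ∀ i, b ≤ g i := by
    intro i; induction i with
    | zero => exact hab.le
    | succ n ih => rw [hgs]; exact le_max_left _ _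
  have hdec : ∀ i, b < g i → g (i + 1) < g i := by
    intro i hi
    rw [hgs]
    have h1 : 2 * g i / 3 < g i := by
      rw [Nat.div_lt_iff_lt_mul (by norm_num)]
      omega
    exact max_lt hi h1
  have hex : ∃ i, g i = b := by
    have key : ∀ i, g i = b ∨ g i ≤ a - i := by
      intro i; induction i with
      | zero => right; simp [hg0]
      | succ n ih =>
        rcases ih with h | h
        · left
          rw [hgs, h]
          omega
        · by_cases hb : g n = b
          · left; rw [hgs, hb]; omega
          · have hbn : b < g n := lt_of_le_of_ne (hgeb n) (Ne.symm hb)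
            have := hdec n hbn
            right; omega
    refine ⟨a - b, ?_⟩
    rcases key (a - b) with h | h
    · exact h
    · have := hgeb (a - b); omega
  set k := Nat.find hex with hkdef
  have hk : g k = b := Nat.find_spec hex
  have hlt : ∀ i < k, b < g i := by
    intro i hi
    exact lt_of_le_of_ne (hgeb i) (Ne.symm (Nat.find_min hex hi))
  refine ⟨k, g, ⟨?_, ?_⟩, hg0, hk, ?_⟩
  · intro i _; exact lt_of_lt_of_le ha (hgeb i)
  · intro i h1 h2
    obtain ⟨j, rfl⟩ : ∃ j, i = j + 1 := ⟨i - 1, by omega⟩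
    simp only [Nat.add_sub_cancel]
    have hj : b < g j := hlt j (by omega)
    exact ⟨hdec j hj, by rw [hgs]; exact le_max_right _ _⟩
  · -- the length bound
    have ha2 : 2 ≤ a := by omega
    by_cases hk1 : k ≤ 1
    · have hloga : 0 ≤ Real.logb (3 / 2) a := by
        apply Real.logb_nonneg (by norm_num)
        exact_mod_cast Nat.one_le_cast.mpr (by omega)
      have : (k : ℝ) ≤ 1 := by exact_mod_cast hk1
      linarith
    · have hk2 : 2 ≤ k := by omega
      have hupper : ∀ i < k, (g i : ℝ) ≤ (a : ℝ) * (2 / 3) ^ i := by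
        intro i hi
        induction i with
        | zero => simp [hg0]
        | succ n ih =>
          have hn : n < k := by omega
          have ihn := ih hn
          have hgn1 : b < g (n + 1) := hlt (n + 1) hi
          have heq : g (n + 1) = 2 * g n / 3 := by
            rw [hgs] at hgn1 ⊢
            omega
          have hcast : (g (n + 1) : ℝ) ≤ 2 / 3 * (g n : ℝ) := by
            rw [heq]
            have := Nat.cast_div_le (α := ℝ) (m := 2 * g n) (n := 3)
            push_cast at this
            linarith
          calc (g (n + 1) : ℝ) ≤ 2 / 3 * g n := hcast
            _ ≤ 2 / 3 * ((a : ℝ) * (2 / 3) ^ n) := by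
                apply mul_le_mul_of_nonneg_left ihn (by norm_num)
            _ = (a : ℝ) * (2 / 3) ^ (n + 1) := by ring
      have h1 : (2 : ℝ) ≤ (a : ℝ) * (2 / 3) ^ (k - 1) := by
        have hu := hupper (k - 1) (by omega)
        have hb1 : b + 1 ≤ g (k - 1) := hlt (k - 1) (by omega)
        have h2g : (2 : ℝ) ≤ (g (k - 1) : ℝ) := by exact_mod_cast (by omega : 2 ≤ g (k - 1))
        linarith
      have h2 : ((3 : ℝ) / 2) ^ (k - 1) < (a : ℝ) := by
        have hcd : ((3 : ℝ) / 2) ^ (k - 1) * ((2 : ℝ) / 3) ^ (k - 1) = 1 := by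
          rw [← mul_pow]; norm_num
        have hc : (0 : ℝ) < ((3 : ℝ) / 2) ^ (k - 1) := by positivity
        nlinarith [hc, h1, hcd]
      have h3 : ((k : ℝ) - 1) < Real.logb (3 / 2) a := by
        have := Real.logb_lt_logb (b := 3 / 2) (by norm_num) (by positivity) h2
        rwa [Real.logb_pow, Real.logb_self_eq_one (b := 3/2) (by norm_num),
          mul_one, Nat.cast_sub (by omega), Nat.cast_one] at this
      linarith
end

section
/- Let (η_0, ..., η_k) be a reshaping sequence, let n be a positive integer, and let (g_1, ..., g_k) be positive integers satisfying g_i ≤ ⌊n / (2·η_i − η_{i-1} + 1)⌋ + 1 for all i. Then for any i_0 with 1 ≤ i_0 ≤ k, the sum Σ_{i=i_0}^{k} η_i · g_i is at most (3n + η_{i_0}) · k. -/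
/-! Each reshaper contributes `η i * g i ≤ 3 n + η i`: the divisor `d = 2 η i - η (i-1) + 1`
satisfies `η i ≤ 3 d`, so `η i * ⌊n / d⌋ ≤ 3 n`. Since `η` decreases, every term is at most
`3 n + η i₀`, and there are at most `k` terms. -/

namespace IsReshapingSeq

variable {k : ℕ} {η : ℕ → ℕ}

theorem strictAntiOn (hη : IsReshapingSeq k η) : StrictAntiOn η (Set.Iic k) :=
  strictAntiOn_of_lt_sub_one Set.ordConnected_Iic fun i hi hik _ =>
    (hη.2 i (Nat.one_le_iff_ne_zero.2 (by simpa using hi)) hik).1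

theorem le_three_mul_divisor (hη : IsReshapingSeq k η) {i : ℕ} (hi : 1 ≤ i) (hik : i ≤ k) :
    η i ≤ 3 * (2 * η i - η (i - 1) + 1) := by
  obtain ⟨hlt, hfloor⟩ := hη.2 i hi hik
  have : 2 * η (i - 1) ≤ 3 * η i + 2 := by omega
  omega

end IsReshapingSeq

theorem mul_le_mul_add_of_le_div_add_one {a c d n g : ℕ} (had : a ≤ c * d)
    (hg : g ≤ n / d + 1) : a * g ≤ c * n + a :=
  calc a * g ≤ a * (n / d + 1) := Nat.mul_le_mul_left a hg
    _ = a * (n / d) + a := by ring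
    _ ≤ c * (d * (n / d)) + a := by
        rw [← mul_assoc]; exact Nat.add_le_add_right (Nat.mul_le_mul_right _ had) a
    _ ≤ c * n + a := Nat.add_le_add_right (Nat.mul_le_mul_left c (Nat.mul_div_le n d)) a

theorem stmt_3_general (k n : ℕ) (η g : ℕ → ℕ) (hη : IsReshapingSeq k η)
    (hg : ∀ i, 1 ≤ i → i ≤ k → g i ≤ n / (2 * η i - η (i - 1) + 1) + 1)
    (i₀ : ℕ) (h1 : 1 ≤ i₀) :
    ∑ i ∈ Finset.Icc i₀ k, η i * g i ≤ (3 * n + η i₀) * k := by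
  have hterm : ∀ i ∈ Finset.Icc i₀ k, η i * g i ≤ 3 * n + η i₀ := by
    intro i hi
    obtain ⟨hi₀, hik⟩ := Finset.mem_Icc.1 hi
    have hdec : η i ≤ η i₀ :=
      hη.strictAntiOn.antitoneOn (Set.mem_Iic.2 (hi₀.trans hik)) (Set.mem_Iic.2 hik) hi₀
    calc η i * g i ≤ 3 * n + η i :=
          mul_le_mul_add_of_le_div_add_one (hη.le_three_mul_divisor (h1.trans hi₀) hik)
            (hg i (h1.trans hi₀) hik)
      _ ≤ 3 * n + η i₀ := Nat.add_le_add_left hdec _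
  calc ∑ i ∈ Finset.Icc i₀ k, η i * g i
      ≤ (Finset.Icc i₀ k).card • (3 * n + η i₀) := Finset.sum_le_card_nsmul _ _ _ hterm
    _ ≤ (3 * n + η i₀) * k := by
        rw [smul_eq_mul, Nat.card_Icc, mul_comm]
        exact Nat.mul_le_mul_left _ (by omega)

theorem stmt_3 (k n : ℕ) (hn : 0 < n) (η g : ℕ → ℕ) (hη : IsReshapingSeq k η)
    (hgpos : ∀ i, 1 ≤ i → i ≤ k → 0 < g i)
    (hg : ∀ i, 1 ≤ i → i ≤ k → g i ≤ n / (2 * η i - η (i - 1) + 1) + 1)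
    (i₀ : ℕ) (h1 : 1 ≤ i₀) (h2 : i₀ ≤ k) :
    ∑ i ∈ Finset.Icc i₀ k, η i * g i ≤ (3 * n + η i₀) * k :=
  stmt_3_general k n η g hη hg i₀ h1
end

section
/- Let K be a field, I an ideal of K[x,y], f ∈ K[x,y], and η, η' positive integers with η' > η and deg_y f < η'. Suppose g = y^η − ĝ with g ∈ I and deg_y ĝ ≤ 2η − η'. Write f = f_1·y^η + f_0 with deg_y f_0 < η. Then f' := f_1·ĝ + f_0 satisfies: (1) f' ∈ f + I; (2) deg_y f' < η; (3) deg_x f' ≤ deg_x f + deg_x g. -/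
/-! Since `f - f' = f₁ · g`, membership in `f + I` is immediate. Every monomial of `f₁ · y^η` has
`y`-degree at least `η` while those of `f₀` have `y`-degree below `η`, so the two summands of `f` do
not cancel: `f₁` and `f₀` have `x`-degree at most `deg_x f`, and `deg_y f₁ + η ≤ deg_y f < η'`.
Hence `deg_y (f₁ ĝ) < (η' - η) + (2η - η') = η`, and `deg_x ĝ = deg_x (y^η - g) ≤ deg_x g`. -/

open MvPolynomial

namespace MvPolynomial

variable {R σ : Type*} [CommSemiring R] {p q : MvPolynomial σ R} {i : σ} {n : ℕ}

lemma disjoint_support_mul_X_pow_of_degreeOf_lt (h : degreeOf i q < n) :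
    Disjoint (p * X i ^ n).support q.support := by
  refine Finset.disjoint_left.2 fun m hp hq => ?_
  rw [X_pow_eq_monomial, mem_support_iff, coeff_mul_monomial'] at hp
  have hle : Finsupp.single i n ≤ m := by by_contra hle; exact hp (if_neg hle)
  have hni : n ≤ m i := by simpa using hle i
  have := monomial_le_degreeOf i hq
  omega

lemma degreeOf_le_degreeOf_add_of_disjoint (j : σ) (h : Disjoint p.support q.support) :
    degreeOf j p ≤ degreeOf j (p + q) := by
  refine degreeOf_le_iff.2 fun m hm => monomial_le_degreeOf j ?_
  have hq : coeff m q = 0 := notMem_support_iff.1 (Finset.disjoint_left.1 h hm)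
  rwa [mem_support_iff, coeff_add, hq, add_zero, ← mem_support_iff]

lemma degreeOf_mul_X_pow_le_degreeOf_add (j : σ) (h : degreeOf i q < n) :
    degreeOf j (p * X i ^ n) ≤ degreeOf j (p * X i ^ n + q) :=
  degreeOf_le_degreeOf_add_of_disjoint j (disjoint_support_mul_X_pow_of_degreeOf_lt h)

lemma degreeOf_le_degreeOf_mul_X_pow_add (j : σ) (h : degreeOf i q < n) :
    degreeOf j q ≤ degreeOf j (p * X i ^ n + q) := by
  rw [add_comm]
  exact degreeOf_le_degreeOf_add_of_disjoint j (disjoint_support_mul_X_pow_of_degreeOf_lt h).symm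

end MvPolynomial

theorem stmt_5_general {K : Type*} [Field K] (I : Ideal (MvPolynomial (Fin 2) K))
    (f g gg f₁ f₀ : MvPolynomial (Fin 2) K) (η η' : ℕ)
    (hf : degreeOf 1 f < η')
    (hg : g = X 1 ^ η - gg) (hgI : g ∈ I)
    (hgg : (degreeOf 1 gg : ℤ) ≤ 2 * (η : ℤ) - (η' : ℤ))
    (hsplit : f = f₁ * X 1 ^ η + f₀) (hf₀ : degreeOf 1 f₀ < η) :
    (f₁ * gg + f₀) - f ∈ I ∧
      degreeOf 1 (f₁ * gg + f₀) < η ∧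
      degreeOf 0 (f₁ * gg + f₀) ≤ degreeOf 0 f + degreeOf 0 g := by
  refine ⟨?_, ?_, ?_⟩
  · have hdiff : f₁ * gg + f₀ - f = -(f₁ * g) := by rw [hsplit, hg]; ring
    exact hdiff ▸ neg_mem (I.mul_mem_left f₁ hgI)
  · have hf₁gg : degreeOf 1 (f₁ * gg) < η := by
      rcases eq_or_ne f₁ 0 with rfl | hf₁
      · simpa using (Nat.zero_le _).trans_lt hf₀
      · have hf₁y := degreeOf_mul_X_pow_le_degreeOf_add (p := f₁) 1 hf₀
        rw [degreeOf_mul_X_self_pow_eq_add_of_ne_zero _ _ hf₁, ← hsplit] at hf₁y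
        have := degreeOf_mul_le 1 f₁ gg
        omega
    exact (degreeOf_add_le 1 _ _).trans_lt (max_lt hf₁gg hf₀)
  · have hf₁x : degreeOf 0 f₁ ≤ degreeOf 0 f := by
      have := degreeOf_mul_X_pow_le_degreeOf_add (p := f₁) 0 hf₀
      rwa [degreeOf_mul_X_pow_of_ne _ (by decide), ← hsplit] at this
    have hf₀x : degreeOf 0 f₀ ≤ degreeOf 0 f := hsplit ▸ degreeOf_le_degreeOf_mul_X_pow_add 0 hf₀
    have hggx : degreeOf 0 gg ≤ degreeOf 0 g := by
      have hgg' : gg = X 1 ^ η - g := by rw [hg, sub_sub_cancel]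
      have := degreeOf_sub_le 0 (X 1 ^ η) g
      rwa [degreeOf_X_pow_of_ne _ (by decide), zero_max, ← hgg'] at this
    have := degreeOf_mul_le 0 f₁ gg
    have := degreeOf_add_le 0 (f₁ * gg) f₀
    omega

theorem stmt_5 {K : Type*} [Field K] (I : Ideal (MvPolynomial (Fin 2) K))
    (f g gg f₁ f₀ : MvPolynomial (Fin 2) K) (η η' : ℕ)
    (hη : 0 < η) (hηη' : η < η')
    (hf : degreeOf 1 f < η')
    (hg : g = X 1 ^ η - gg) (hgI : g ∈ I)
    (hgg : (degreeOf 1 gg : ℤ) ≤ 2 * (η : ℤ) - (η' : ℤ))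
    (hsplit : f = f₁ * X 1 ^ η + f₀) (hf₀ : degreeOf 1 f₀ < η) :
    (f₁ * gg + f₀) - f ∈ I ∧
      degreeOf 1 (f₁ * gg + f₀) < η ∧
      degreeOf 0 (f₁ * gg + f₀) ≤ degreeOf 0 f + degreeOf 0 g :=
  stmt_5_general I f g gg f₁ f₀ η η' hf hg hgI hgg hsplit hf₀
end

section
/- Let K be a field, M, A ∈ K[x] with n = deg M ≥ 1, let I = ⟨M, y − A⟩ ⊆ K[x,y], and let δ ≥ 1. Then the set I_δ = { f ∈ I : deg_y f < δ } is a free K[x]-submodule of { f ∈ K[x,y] : deg_y f < δ } of rank δ, with basis { M, (y − A), y·(y − A), ..., y^{δ−2}·(y − A) }. -/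
/-!
Dividing by the monic `X - C a` writes every `f` as `C (f.eval a) + (X - C a) * q` with
`deg q < deg f`, so `f ∈ ⟨C m, X - C a⟩` exactly when `m ∣ f.eval a`. Hence the elements of the
ideal of degree `< n + 1` are `R ∙ C m` plus `(X - C a)` times the polynomials of degree `< n`;
the second summand has basis `X ^ i * (X - C a)` because multiplication by a monic polynomial is
injective, and `C m` is independent from it since only `C m` does not vanish at `a`.
-/

open Polynomial

namespace Polynomial

variable {R : Type*} [CommRing R]

noncomputable def degreeLTIdealGens (m a : R) (n : ℕ) : Fin (n + 1) → R[X] :=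
  Fin.cons (C m) fun i => X ^ (i : ℕ) * (X - C a)

theorem mem_span_C_X_sub_C_iff {m a : R} {f : R[X]} :
    f ∈ Ideal.span {C m, X - C a} ↔ m ∣ f.eval a := by
  rw [Ideal.mem_span_pair]
  constructor
  · rintro ⟨p, q, rfl⟩
    exact ⟨p.eval a, by simp [mul_comm]⟩
  · rintro ⟨c, hc⟩
    refine ⟨C c, f /ₘ (X - C a), ?_⟩
    rw [← C_mul, mul_comm c, ← hc, mul_comm, ← modByMonic_X_sub_C_eq_C_eval, modByMonic_add_div]

theorem mem_map_mulRight_X_sub_C_degreeLT_iff [Nontrivial R] {a : R} {n : ℕ} {f : R[X]} :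
    f ∈ (degreeLT R n).map (LinearMap.mulRight R (X - C a)) ↔
      f.degree < ↑(n + 1) ∧ f.IsRoot a := by
  constructor
  · rintro ⟨q, hq, rfl⟩
    rw [SetLike.mem_coe, mem_degreeLT] at hq
    refine ⟨?_, by simp⟩
    rw [LinearMap.mulRight_apply, (monic_X_sub_C a).degree_mul, degree_X_sub_C]
    push_cast
    exact WithBot.add_lt_add_right WithBot.one_ne_bot hq
  · rintro ⟨hdeg, hroot⟩
    refine ⟨f /ₘ (X - C a), mem_degreeLT.2 ?_, ?_⟩
    · rw [← mul_divByMonic_eq_iff_isRoot.2 hroot, mul_comm, (monic_X_sub_C a).degree_mul,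
        degree_X_sub_C] at hdeg
      push_cast at hdeg
      exact lt_of_add_lt_add_right hdeg
    · rw [LinearMap.mulRight_apply, mul_comm, mul_divByMonic_eq_iff_isRoot.2 hroot]

theorem span_range_X_pow_mul_X_sub_C (a : R) (n : ℕ) :
    Submodule.span R (Set.range fun i : Fin n => X ^ (i : ℕ) * (X - C a)) =
      (degreeLT R n).map (LinearMap.mulRight R (X - C a)) := by
  have : (fun i : Fin n => X ^ (i : ℕ) * (X - C a)) =
      (LinearMap.mulRight R (X - C a)) ∘ (degreeLT R n).subtype ∘ degreeLT.basis R n := by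
    funext i; simp
  rw [this, Set.range_comp, Submodule.span_image, Set.range_comp, Submodule.span_image,
    (degreeLT.basis R n).span_eq, Submodule.map_top, Submodule.range_subtype]

theorem linearIndependent_X_pow_mul_X_sub_C (a : R) (n : ℕ) :
    LinearIndependent R fun i : Fin n => X ^ (i : ℕ) * (X - C a) := by
  have : (fun i : Fin n => X ^ (i : ℕ) * (X - C a)) =
      ((LinearMap.mulRight R (X - C a)) ∘ₗ (degreeLT R n).subtype) ∘ degreeLT.basis R n := by
    funext i; simp
  rw [this]
  refine (degreeLT.basis R n).linearIndependent.map' _ (LinearMap.ker_eq_bot.2 ?_)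
  exact (monic_X_sub_C a).isRegular.right.comp Subtype.val_injective

theorem linearIndependent_degreeLTIdealGens [NoZeroDivisors R] {m : R} (hm : m ≠ 0) (a : R)
    (n : ℕ) : LinearIndependent R (degreeLTIdealGens m a n) := by
  unfold degreeLTIdealGens
  refine LinearIndependent.finCons' (C m) _ (linearIndependent_X_pow_mul_X_sub_C a n) ?_
  intro c y hy hsum
  rw [span_range_X_pow_mul_X_sub_C] at hy
  obtain ⟨q, -, rfl⟩ := hy
  have heval := congrArg (eval a) hsum
  simp only [eval_add, eval_smul, eval_C, LinearMap.mulRight_apply, eval_mul, eval_sub, eval_X,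
    sub_self, mul_zero, add_zero, eval_zero, smul_eq_mul] at heval
  exact (mul_eq_zero.1 heval).resolve_right hm

theorem span_range_degreeLTIdealGens [Nontrivial R] (m a : R) (n : ℕ) :
    Submodule.span R (Set.range (degreeLTIdealGens m a n)) =
      (Ideal.span {C m, X - C a}).restrictScalars R ⊓ degreeLT R (n + 1) := by
  have hdegC (r : R) : (C r).degree < ↑(n + 1) :=
    degree_C_le.trans_lt (by exact_mod_cast Nat.succ_pos n)
  rw [degreeLTIdealGens, Fin.range_cons, Submodule.span_insert, span_range_X_pow_mul_X_sub_C]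
  apply le_antisymm
  · refine sup_le ((Submodule.span_singleton_le_iff_mem _ _).2 ⟨?_, ?_⟩) fun f hf => ⟨?_, ?_⟩
    · exact Ideal.subset_span (Set.mem_insert _ _)
    · exact mem_degreeLT.2 (hdegC m)
    · rw [mem_map_mulRight_X_sub_C_degreeLT_iff] at hf
      exact mem_span_C_X_sub_C_iff.2 (hf.2.symm ▸ dvd_zero m)
    · exact mem_degreeLT.2 (mem_map_mulRight_X_sub_C_degreeLT_iff.1 hf).1
  · intro f hf
    obtain ⟨hfI, hfdeg⟩ := Submodule.mem_inf.1 hf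
    obtain ⟨c, hc⟩ := mem_span_C_X_sub_C_iff.1 hfI
    rw [mem_degreeLT] at hfdeg
    have hrest : f - C (f.eval a) ∈ (degreeLT R n).map (LinearMap.mulRight R (X - C a)) :=
      mem_map_mulRight_X_sub_C_degreeLT_iff.2
        ⟨(degree_sub_le _ _).trans_lt (max_lt hfdeg (hdegC _)), by simp⟩
    have hconst : C (f.eval a) ∈ R ∙ C m :=
      Submodule.mem_span_singleton.2 ⟨c, by rw [hc, smul_eq_C_mul, ← C_mul, mul_comm]⟩
    simpa using Submodule.add_mem_sup hconst hrest

end Polynomial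

theorem stmt_14 {K : Type*} [Field K] (M A : Polynomial K) (hM : 1 ≤ M.natDegree)
    (δ : ℕ) (hδ : 1 ≤ δ)
    (v : Fin δ → Polynomial (Polynomial K))
    (hv : ∀ j : Fin δ, v j = if (j : ℕ) = 0 then C M
        else X ^ ((j : ℕ) - 1) * (X - C A)) :
    LinearIndependent (Polynomial K) v ∧
      (Submodule.span (Polynomial K) (Set.range v) : Set (Polynomial (Polynomial K)))
        = {f | f ∈ Ideal.span ({C M, X - C A} : Set (Polynomial (Polynomial K)))
            ∧ f.degree < (δ : ℕ)} := by
  obtain ⟨n, rfl⟩ : ∃ n, δ = n + 1 := ⟨δ - 1, by omega⟩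
  obtain rfl : v = degreeLTIdealGens M A n := by
    funext j
    rw [hv j]
    induction j using Fin.cases <;> simp [degreeLTIdealGens]
  refine ⟨linearIndependent_degreeLTIdealGens (ne_zero_of_natDegree_gt hM) A n, ?_⟩
  rw [span_range_degreeLTIdealGens]
  ext f
  simp [mem_degreeLT]
end

section
/- Let K be a field and α_1, ..., α_n distinct elements of K. For positive integers m, s, the n × (ms) matrix Â over K whose entry in row i and column j (1 ≤ j ≤ ms) is α_i^{j−1} has rank min(n, ms). More generally, the matrix A_s over K(y_1,...,y_n) with block structure [V_s | D·V_s | ... | D^{m−1}·V_s], where V_s = [α_i^{j−1}]_{1≤i≤n, 1≤j≤s} and D = diag(y_1, ..., y_n) with y_1,...,y_n indeterminates, has rank min(n, ms). -/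
open Matrix

set_option maxHeartbeats 1000000 in
lemma aux_rank_submatrix_le {R : Type*} [CommRing R] [StrongRankCondition R]
    {p q l o : Type*} [Fintype p] [Fintype q] [Fintype l] [Fintype o]
    [DecidableEq p] [DecidableEq q]
    (A : Matrix p q R) (f : l → p) (g : o → q) :
    (A.submatrix f g).rank ≤ A.rank := by
  have h1 : A.submatrix f g =
      ((1 : Matrix p p R).submatrix f (Equiv.refl p)) * A *
        ((1 : Matrix q q R).submatrix (Equiv.refl q) g) := by
    rw [Matrix.mul_submatrix_one, Matrix.one_submatrix_mul]
    simp
  rw [h1]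
  calc (((1 : Matrix p p R).submatrix f (Equiv.refl p)) * A *
        ((1 : Matrix q q R).submatrix (Equiv.refl q) g)).rank
      ≤ (((1 : Matrix p p R).submatrix f (Equiv.refl p)) * A).rank :=
        Matrix.rank_mul_le_left _ _
    _ ≤ A.rank := Matrix.rank_mul_le_right _ _

lemma aux_rank_ge {F : Type*} [Field F] {a b r : ℕ}
    (A : Matrix (Fin a) (Fin b) F) (f : Fin r → Fin a) (g : Fin r → Fin b)
    (h : (A.submatrix f g).det ≠ 0) : r ≤ A.rank := by
  have hu : IsUnit (A.submatrix f g) := by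
    rw [Matrix.isUnit_iff_isUnit_det]
    exact isUnit_iff_ne_zero.mpr h
  have := Matrix.rank_of_isUnit _ hu
  calc r = (Fintype.card (Fin r)) := (Fintype.card_fin r).symm
    _ = (A.submatrix f g).rank := this.symm
    _ ≤ A.rank := aux_rank_submatrix_le A f g

theorem stmt_15 {K : Type*} [Field K] (n m s : ℕ) (hm : 0 < m) (hs : 0 < s)
    (α : Fin n → K) (hα : Function.Injective α) :
    (Matrix.of fun (i : Fin n) (j : Fin (m * s)) => α i ^ (j : ℕ)).rank = min n (m * s) ∧
      (Matrix.of fun (i : Fin n) (j : Fin (m * s)) =>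
          algebraMap (MvPolynomial (Fin n) K) (FractionRing (MvPolynomial (Fin n) K))
            (MvPolynomial.X i ^ ((j : ℕ) / s) * MvPolynomial.C (α i) ^ ((j : ℕ) % s))).rank
        = min n (m * s) := by
  set r := min n (m * s) with hr
  have hrn : r ≤ n := min_le_left _ _
  have hrms : r ≤ m * s := min_le_right _ _
  set f : Fin r → Fin n := Fin.castLE hrn with hf
  set g : Fin r → Fin (m * s) := Fin.castLE hrms with hg
  have hαf : Function.Injective (fun i : Fin r => α (f i)) :=
    hα.comp (Fin.castLE_injective hrn)
  have hvdm : (Matrix.vandermonde fun i : Fin r => α (f i)).det ≠ 0 :=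
    Matrix.det_vandermonde_ne_zero_iff.mpr hαf
  constructor
  · -- first matrix
    apply le_antisymm
    · exact le_min ((Matrix.rank_le_card_height _).trans_eq (Fintype.card_fin n))
        ((Matrix.rank_le_card_width _).trans_eq (Fintype.card_fin (m * s)))
    · apply aux_rank_ge _ f g
      have : ((Matrix.of fun (i : Fin n) (j : Fin (m * s)) => α i ^ (j : ℕ)).submatrix f g)
          = Matrix.vandermonde (fun i : Fin r => α (f i)) := by
        ext i j
        simp [Matrix.vandermonde, hg]
      rw [this]
      exact hvdm
  · -- second matrix
    set R := MvPolynomial (Fin n) K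
    set L := FractionRing R
    set M : Matrix (Fin n) (Fin (m * s)) R :=
      Matrix.of fun (i : Fin n) (j : Fin (m * s)) =>
        MvPolynomial.X i ^ ((j : ℕ) / s) * MvPolynomial.C (α i) ^ ((j : ℕ) % s) with hM
    apply le_antisymm
    · exact le_min ((Matrix.rank_le_card_height _).trans_eq (Fintype.card_fin n))
        ((Matrix.rank_le_card_width _).trans_eq (Fintype.card_fin (m * s)))
    · apply aux_rank_ge _ f g
      have hsub : ((Matrix.of fun (i : Fin n) (j : Fin (m * s)) =>
          algebraMap R L (MvPolynomial.X i ^ ((j : ℕ) / s)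
            * MvPolynomial.C (α i) ^ ((j : ℕ) % s))).submatrix f g)
          = (algebraMap R L).mapMatrix (M.submatrix f g) := by
        ext i j
        simp [hM]
      rw [hsub, ← RingHom.map_det]
      -- evaluate at yᵢ ↦ αᵢ ^ s
      set ψ : R →+* K := MvPolynomial.eval (fun i => α i ^ s) with hψ
      have hdetM : (M.submatrix f g).det ≠ 0 := by
        intro h0
        have : ψ ((M.submatrix f g).det) = 0 := by rw [h0, map_zero]
        rw [RingHom.map_det] at this
        have heval : ψ.mapMatrix (M.submatrix f g)
            = Matrix.vandermonde (fun i : Fin r => α (f i)) := by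
          ext i j
          simp only [RingHom.mapMatrix_apply, Matrix.map_apply, Matrix.submatrix_apply, hM,
            Matrix.of_apply, Matrix.vandermonde]
          rw [_root_.map_mul, _root_.map_pow, _root_.map_pow, MvPolynomial.eval_X,
            MvPolynomial.eval_C, ← pow_mul, ← pow_add]
          congr 1
          simp only [hg, Fin.coe_castLE]
          exact Nat.div_add_mod _ s
        rw [heval] at this
        exact hvdm this
      intro h0
      exact hdetM <| (map_eq_zero_iff _
        (IsFractionRing.injective R L)).mp h0
end

section
/- Let K be a field and (η_0, ..., η_k) a reshaping sequence with η_k = 1. Let P ⊆ K² be a finite point set, I = Γ(P) its vanishing ideal, and suppose (g_1, ..., g_k) is an η-reshaper for I, i.e., g_i = y^{η_i} + ĝ_i ∈ I with deg_y ĝ_i ≤ 2η_i − η_{i−1}. Then for any f ∈ K[x,y] with deg_y f < η_0, iterating the reduction step (replacing f by f_1·(−ĝ_i) + f_0 where f = f_1 y^{η_i} + f_0, deg_y f_0 < η_i, for i = 1, ..., k) produces a polynomial f̂ ∈ f + I with deg_y f̂ = 0 (i.e., f̂ ∈ K[x]) and deg_x f̂ ≤ deg_x f + Σ_{i=1}^k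 deg_x g_i, and moreover f̂(α) = f(α, β) for every (α, β) ∈ P. -/
/-- A bivariate polynomial over `K` as an element of `K[x][y]` (`y` the outer
variable); its `x`-degree is the max of the `x`-degrees of its coefficients. -/
noncomputable def degX {K : Type*} [Field K] (h : Polynomial (Polynomial K)) : ℕ :=
  h.support.sup fun j => (h.coeff j).natDegree

/-- Evaluation of a bivariate polynomial in `K[x][y]` at a point `(a, b)`. -/
noncomputable def evalXY {K : Type*} [Field K] (h : Polynomial (Polynomial K)) (a b : K) : K :=
  (h.map (Polynomial.evalRingHom a)).eval b

/-!
Each step writes `F = q y^m + r` with `deg_y r < m` and replaces `F` by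
`q (-ĝ) + r = F - q g`. Since `g` vanishes on `P`, the values on `P` are unchanged. If
`deg_y F < n`, then `deg_y q < n - m` and `deg_y ĝ ≤ 2m - n`, so the new polynomial has
`y`-degree `< m`; its `x`-degree grows by at most `deg_x ĝ ≤ deg_x g`. After the last step
`m = 1`, so `F` is constant in `y`.
-/

open Polynomial

section DegX

variable {K : Type*} [Field K]

lemma natDegree_coeff_le_degX (p : K[X][X]) (j : ℕ) : (p.coeff j).natDegree ≤ degX p := by
  by_cases hj : p.coeff j = 0
  · simp [hj]
  · exact Finset.le_sup (f := fun j => (p.coeff j).natDegree) (mem_support_iff.mpr hj)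

lemma degX_le_of_forall {p : K[X][X]} {n : ℕ} (hn : ∀ j, (p.coeff j).natDegree ≤ n) :
    degX p ≤ n :=
  Finset.sup_le fun j _ => hn j

lemma degX_add_le (p q : K[X][X]) : degX (p + q) ≤ max (degX p) (degX q) :=
  degX_le_of_forall fun j => (coeff_add p q j ▸ natDegree_add_le _ _).trans
    (max_le_max (natDegree_coeff_le_degX p j) (natDegree_coeff_le_degX q j))

@[simp]
lemma degX_neg (p : K[X][X]) : degX (-p) = degX p := by
  simp [degX]

lemma degX_mul_le (p q : K[X][X]) : degX (p * q) ≤ degX p + degX q := by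
  refine degX_le_of_forall fun j => ?_
  rw [coeff_mul]
  refine natDegree_sum_le_of_forall_le _ _ fun x _ => natDegree_mul_le.trans ?_
  exact add_le_add (natDegree_coeff_le_degX _ _) (natDegree_coeff_le_degX _ _)

@[simp]
lemma degX_X_pow (m : ℕ) : degX (X ^ m : K[X][X]) = 0 :=
  Nat.eq_zero_of_le_zero <| degX_le_of_forall fun j => by
    rw [coeff_X_pow]; split_ifs <;> simp

lemma degX_sub_X_pow_le (p : K[X][X]) (m : ℕ) : degX (p - X ^ m) ≤ degX p := by
  simpa [sub_eq_add_neg] using degX_add_le p (-X ^ m)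

end DegX

section EvalXY

variable {K : Type*} [Field K]

@[simp]
lemma evalXY_C (c : K[X]) (a b : K) : evalXY (C c) a b = c.eval a := by
  simp [evalXY]

@[simp]
lemma evalXY_sub (p q : K[X][X]) (a b : K) : evalXY (p - q) a b = evalXY p a b - evalXY q a b := by
  simp [evalXY]

@[simp]
lemma evalXY_mul (p q : K[X][X]) (a b : K) : evalXY (p * q) a b = evalXY p a b * evalXY q a b := by
  simp [evalXY]

end EvalXY

section DivisionByXPow

variable {R : Type*} [CommRing R] {F q r : R[X]} {m : ℕ}

lemma coeff_quotient_of_eq_mul_X_pow_add (hF : F = q * X ^ m + r) (hr : r.degree < m) (j : ℕ) :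
    q.coeff j = F.coeff (j + m) := by
  have hrj : r.coeff (j + m) = 0 :=
    coeff_eq_zero_of_degree_lt (hr.trans_le (by exact_mod_cast Nat.le_add_left m j))
  simp [hF, coeff_mul_X_pow, hrj]

lemma coeff_remainder_of_eq_mul_X_pow_add (hF : F = q * X ^ m + r) (hr : r.degree < m) (j : ℕ) :
    r.coeff j = if j < m then F.coeff j else 0 := by
  split_ifs with hj
  · simp [hF, coeff_mul_X_pow', hj.not_ge]
  · exact coeff_eq_zero_of_degree_lt (hr.trans_le (by exact_mod_cast not_lt.mp hj))

lemma natDegree_eq_of_eq_mul_X_pow_add [Nontrivial R] (hq : q ≠ 0) (hF : F = q * X ^ m + r)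
    (hr : r.degree < m) : F.natDegree = q.natDegree + m := by
  rw [hF, natDegree_add_eq_left_of_degree_lt, natDegree_mul_X_pow m hq]
  rw [degree_mul_X_pow, degree_eq_natDegree hq]
  exact hr.trans_le (by exact_mod_cast Nat.le_add_left m q.natDegree)

lemma natDegree_mul_neg_add_lt [Nontrivial R] {gg : R[X]} {n : ℕ} (hm : 0 < m)
    (hgg : (gg.natDegree : ℤ) ≤ 2 * m - n) (hFn : F.natDegree < n) (hF : F = q * X ^ m + r)
    (hr : r.degree < m) : (q * -gg + r).natDegree < m := by
  have hr' : r.natDegree < m := by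
    by_cases hr0 : r = 0
    · simpa [hr0] using hm
    · exact (natDegree_lt_iff_degree_lt hr0).mpr hr
  refine (natDegree_add_le _ _).trans_lt (max_lt ?_ hr')
  by_cases hq : q = 0
  · simpa [hq] using hm
  have hFq := natDegree_eq_of_eq_mul_X_pow_add hq hF hr
  have hprod : (q * -gg).natDegree ≤ q.natDegree + gg.natDegree :=
    natDegree_neg gg ▸ natDegree_mul_le
  omega

end DivisionByXPow

section ReshapeStep

variable {K : Type*} [Field K] {F q r g gg : K[X][X]} {m : ℕ}

lemma mul_neg_add_eq_sub_mul (hg : g = X ^ m + gg) (hF : F = q * X ^ m + r) :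
    q * -gg + r = F - q * g := by
  rw [hg, hF]; ring

lemma degX_quotient_le (hF : F = q * X ^ m + r) (hr : r.degree < m) : degX q ≤ degX F :=
  degX_le_of_forall fun j =>
    coeff_quotient_of_eq_mul_X_pow_add hF hr j ▸ natDegree_coeff_le_degX F _

lemma degX_remainder_le (hF : F = q * X ^ m + r) (hr : r.degree < m) : degX r ≤ degX F :=
  degX_le_of_forall fun j => by
    rw [coeff_remainder_of_eq_mul_X_pow_add hF hr]
    split_ifs
    · exact natDegree_coeff_le_degX F j
    · simp

lemma degX_mul_neg_add_le (hg : g = X ^ m + gg) (hF : F = q * X ^ m + r) (hr : r.degree < m) :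
    degX (q * -gg + r) ≤ degX F + degX g := by
  have hgg : degX gg ≤ degX g := by
    simpa [hg] using degX_sub_X_pow_le g m
  calc degX (q * -gg + r) ≤ max (degX (q * -gg)) (degX r) := degX_add_le _ _
    _ ≤ degX F + degX g := max_le
        ((degX_neg gg ▸ degX_mul_le q (-gg)).trans
          (add_le_add (degX_quotient_le hF hr) hgg))
        ((degX_remainder_le hF hr).trans le_self_add)

end ReshapeStep

theorem stmt_19_general {K : Type*} [Field K] (k : ℕ) (η : ℕ → ℕ)
    (hη : IsReshapingSeq k η) (hηk : η k = 1)
    (P : Finset (K × K))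
    (g gg : ℕ → Polynomial (Polynomial K))
    (hgform : ∀ i, 1 ≤ i → i ≤ k → g i = Polynomial.X ^ (η i) + gg i)
    (hggdeg : ∀ i, 1 ≤ i → i ≤ k →
      ((gg i).natDegree : ℤ) ≤ 2 * (η i : ℤ) - (η (i - 1) : ℤ))
    (hgvan : ∀ i, 1 ≤ i → i ≤ k → ∀ p ∈ P, evalXY (g i) p.1 p.2 = 0)
    (f : Polynomial (Polynomial K)) (hf : f.natDegree < η 0)
    (F q r : ℕ → Polynomial (Polynomial K))
    (hF0 : F 0 = f)
    (hstep : ∀ i, 1 ≤ i → i ≤ k →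
      F (i - 1) = q i * Polynomial.X ^ (η i) + r i ∧
        (r i).degree < ((η i : ℕ) : WithBot ℕ) ∧
        F i = q i * (-(gg i)) + r i) :
    (∀ p ∈ P, evalXY (F k - f) p.1 p.2 = 0) ∧
      (F k).natDegree = 0 ∧
      degX (F k) ≤ degX f + ∑ i ∈ Finset.Icc 1 k, degX (g i) ∧
      ∀ p ∈ P, Polynomial.eval p.1 ((F k).coeff 0) = evalXY f p.1 p.2 := by
  have key : ∀ i ≤ k, (∀ p ∈ P, evalXY (F i) p.1 p.2 = evalXY f p.1 p.2) ∧
      (F i).natDegree < η i ∧ degX (F i) ≤ degX f + ∑ j ∈ Finset.Icc 1 i, degX (g j) := by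
    intro i
    induction i with
    | zero => simp [hF0, hf]
    | succ i ih =>
      intro hi
      obtain ⟨hev, hdeg, hdegX⟩ := ih (by omega)
      obtain ⟨hdiv, hr, hFi⟩ := hstep (i + 1) (by omega) hi
      have hg := hgform (i + 1) (by omega) hi
      have hgg := hggdeg (i + 1) (by omega) hi
      simp only [Nat.add_sub_cancel] at hdiv hgg
      rw [hFi, Finset.sum_Icc_succ_top (by omega)]
      refine ⟨fun p hp => ?_, natDegree_mul_neg_add_lt (hη.1 _ hi) hgg hdeg hdiv hr, ?_⟩
      · rw [mul_neg_add_eq_sub_mul hg hdiv, evalXY_sub, evalXY_mul,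
          hgvan _ (by omega) hi p hp, mul_zero, sub_zero, hev p hp]
      · exact (degX_mul_neg_add_le hg hdiv hr).trans (by omega)
  obtain ⟨hev, hdeg, hdegX⟩ := key k le_rfl
  have hconst : (F k).natDegree = 0 := by omega
  refine ⟨fun p hp => by rw [evalXY_sub, hev p hp, sub_self], hconst, hdegX, fun p hp => ?_⟩
  rw [← evalXY_C, ← eq_C_of_natDegree_eq_zero hconst, hev p hp]

theorem stmt_19 {K : Type*} [Field K] (k : ℕ) (hk : 1 ≤ k) (η : ℕ → ℕ)
    (hη : IsReshapingSeq k η) (hηk : η k = 1)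
    (P : Finset (K × K))
    (g gg : ℕ → Polynomial (Polynomial K))
    (hgform : ∀ i, 1 ≤ i → i ≤ k → g i = Polynomial.X ^ (η i) + gg i)
    (hggdeg : ∀ i, 1 ≤ i → i ≤ k →
      ((gg i).natDegree : ℤ) ≤ 2 * (η i : ℤ) - (η (i - 1) : ℤ))
    (hgvan : ∀ i, 1 ≤ i → i ≤ k → ∀ p ∈ P, evalXY (g i) p.1 p.2 = 0)
    (f : Polynomial (Polynomial K)) (hf : f.natDegree < η 0)
    (F q r : ℕ → Polynomial (Polynomial K))
    (hF0 : F 0 = f)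
    (hstep : ∀ i, 1 ≤ i → i ≤ k →
      F (i - 1) = q i * Polynomial.X ^ (η i) + r i ∧
        (r i).degree < ((η i : ℕ) : WithBot ℕ) ∧
        F i = q i * (-(gg i)) + r i) :
    (∀ p ∈ P, evalXY (F k - f) p.1 p.2 = 0) ∧
      (F k).natDegree = 0 ∧
      degX (F k) ≤ degX f + ∑ i ∈ Finset.Icc 1 k, degX (g i) ∧
      ∀ p ∈ P, Polynomial.eval p.1 ((F k).coeff 0) = evalXY f p.1 p.2 :=
  stmt_19_general k η hη hηk P g gg hgform hggdeg hgvan f hf F q r hF0 hstep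
end
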